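/- For a monomial ideal I ⊆ k[x_1,...,x_n], a vector b ∈ ℕ^n, and any vertex v, the complex K_b(I_{X^∨}) equals lk(b^c, X) when I = I_{X^∨} is the Alexander dual Stanley-Reisner ideal: F ∈ K_b(I_{X^∨}) if and only if F ∈ lk(b^c, X). -/

import Mathlib

open Finset
open scoped Classical

/-- A (finite abstract) simplicial complex on vertex set `[n]`, modeled as a
set of finsets of `Fin n`. -/
abbrev SComplex (n : ℕ) := Set (Finset (Fin n))

/-- `X` is a simplicial complex: closed under taking subsets. -/
def IsSComplex {n : ℕ} (X : SComplex n) : Prop := ∀ F ∈ X, ∀ G ⊆ F, G ∈ X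

/-- Alexander dual complex `X^∨ = {F | Fᶜ ∉ X}`. -/
def dualC {n : ℕ} (X : SComplex n) : SComplex n := {F | Fᶜ ∉ X}

/-- Link of a face `F` in `X`. -/
def linkC {n : ℕ} (F : Finset (Fin n)) (X : SComplex n) : SComplex n :=
  {G | F ∪ G ∈ X ∧ F ∩ G = ∅}

/-- Star of a face `F` in `X`. -/
def starC {n : ℕ} (F : Finset (Fin n)) (X : SComplex n) : SComplex n :=
  {G | F ∪ G ∈ X}

/-- Full subcomplex of `X` on the vertex set `b`. -/
def restC {n : ℕ} (X : SComplex n) (b : Finset (Fin n)) : SComplex n :=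
  {F | F ∈ X ∧ F ⊆ b}

/-- Faces of `X` of cardinality `m` (so of dimension `m - 1`). -/
def Faces {n : ℕ} (X : SComplex n) (m : ℤ) : Type :=
  {F : Finset (Fin n) // F ∈ X ∧ (F.card : ℤ) = m}

instance {n : ℕ} (X : SComplex n) (m : ℤ) : Finite (Faces X m) :=
  Subtype.finite

/-- The simplicial boundary map on (reduced, oriented) chains with coefficients in `R`:
from chains in simplicial dimension `d` (faces of cardinality `d+1`) to chains in
dimension `d-1`.  `(∂ f) G = ∑_v ± f (insert v G)`. -/
noncomputable def chainBd (R : Type) [CommRing R] {n : ℕ} (X : SComplex n) (d : ℤ) :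
    (Faces X (d + 1) → R) →ₗ[R] (Faces X d → R) where
  toFun f G := ∑ v : Fin n,
    if h : v ∉ G.1 ∧ insert v G.1 ∈ X then
      ((-1 : R) ^ (G.1.filter (· < v)).card) *
        f ⟨insert v G.1, h.2, by
          have := G.2.2
          rw [Finset.card_insert_of_notMem h.1]
          push_cast
          omega⟩
    else 0
  map_add' f g := by
    funext G
    rw [Pi.add_apply, ← Finset.sum_add_distrib]
    refine Finset.sum_congr rfl fun v _ => ?_
    split_ifs with h
    · exact mul_add _ _ _
    · simp
  map_smul' c f := by
    funext G
    try dsimp only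
    rw [Pi.smul_apply, smul_eq_mul, Finset.mul_sum]
    apply Finset.sum_congr rfl
    intro v _
    split_ifs with h
    · exact mul_left_comm _ _ _
    · simp

/-- The reduced simplicial homology of `X` in dimension `d`, with coefficients in `R`,
as a module: cycles modulo boundaries. -/
noncomputable def hredMod (R : Type) [CommRing R] {n : ℕ} (X : SComplex n) (d : ℤ) :=
  LinearMap.ker (chainBd R X d) ⧸
    Submodule.comap (LinearMap.ker (chainBd R X d)).subtype
      (LinearMap.range (chainBd R X (d + 1)))

/-- The dimension of the reduced simplicial homology `H̃_d(X; k)` over a field `k`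
(computed as `dim ker ∂_d - dim im ∂_{d+1}`). -/
noncomputable def hred (k : Type) [Field k] {n : ℕ} (X : SComplex n) (d : ℤ) : ℕ :=
  Module.finrank k (LinearMap.ker (chainBd k X d)) -
    Module.finrank k (LinearMap.range (chainBd k X (d + 1)))

/-- A monomial ideal in `k[x_1,…,x_n]`, encoded by its set of exponent vectors:
a set of exponent vectors closed under adding arbitrary exponent vectors. -/
def IsMonomialIdealExp {n : ℕ} (I : Set (Fin n → ℕ)) : Prop :=
  ∀ a ∈ I, ∀ c : Fin n → ℕ, a + c ∈ I

/-- Characteristic vector of a finset. -/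
def chi {n : ℕ} (F : Finset (Fin n)) : Fin n → ℕ := fun j => if j ∈ F then 1 else 0

/-- The simplicial complex `K_b(I) = {F | x^(b-F) ∈ I}` attached to a monomial
ideal (given by its exponent set `I`) and a degree `b ∈ ℕ^n`. -/
def Kb {n : ℕ} (I : Set (Fin n → ℕ)) (b : Fin n → ℕ) : SComplex n :=
  {F | (∀ j ∈ F, 1 ≤ b j) ∧ (fun j => b j - chi F j) ∈ I}

/-- Basis of the degree-`b` part of `I ⊗ Λ^m V` in the Koszul complex `I ⊗ K_•`:
squarefree vectors `F` of weight `m` with `F ≤ b` and `x^(b-F) ∈ I`. -/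
def KFaces {n : ℕ} (I : Set (Fin n → ℕ)) (b : Fin n → ℕ) (m : ℤ) : Type :=
  {F : Finset (Fin n) //
    (∀ j ∈ F, 1 ≤ b j) ∧ (fun j => b j - chi F j) ∈ I ∧ (F.card : ℤ) = m}

instance {n : ℕ} (I : Set (Fin n → ℕ)) (b : Fin n → ℕ) (m : ℤ) :
    Finite (KFaces I b m) := Subtype.finite

/-- The degree-`b` part of the Koszul differential `I ⊗ Λ^(m+1) V → I ⊗ Λ^m V`. -/
noncomputable def kosBd (k : Type) [Field k] {n : ℕ} (I : Set (Fin n → ℕ))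
    (b : Fin n → ℕ) (m : ℤ) : (KFaces I b (m + 1) → k) →ₗ[k] (KFaces I b m → k) where
  toFun f G := ∑ v : Fin n,
    if h : v ∉ G.1 ∧ (∀ j ∈ insert v G.1, 1 ≤ b j) ∧
        (fun j => b j - chi (insert v G.1) j) ∈ I then
      ((-1 : k) ^ (G.1.filter (· < v)).card) *
        f ⟨insert v G.1, h.2.1, h.2.2, by
          have := G.2.2.2
          rw [Finset.card_insert_of_notMem h.1]
          push_cast
          omega⟩
    else 0
  map_add' f g := by
    funext G
    rw [Pi.add_apply, ← Finset.sum_add_distrib]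
    refine Finset.sum_congr rfl fun v _ => ?_
    split_ifs with h
    · exact mul_add _ _ _
    · simp
  map_smul' c f := by
    funext G
    try dsimp only
    rw [Pi.smul_apply, smul_eq_mul, Finset.mul_sum]
    apply Finset.sum_congr rfl
    intro v _
    split_ifs with h
    · exact mul_left_comm _ _ _
    · simp

/-- The multigraded Betti number `β_{i,b}(I) = dim_k Tor_i^S(I,k)_b` of a monomial
ideal, computed from the degree-`b` strand of the Koszul complex `I ⊗ K_•`
(whose `i`-th homology is `Tor_i^S(I,k)`), as `dim ker ∂_i - dim im ∂_{i+1}`. -/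
noncomputable def bettiMono (k : Type) [Field k] {n : ℕ} (I : Set (Fin n → ℕ))
    (i : ℕ) (b : Fin n → ℕ) : ℕ :=
  Module.finrank k (LinearMap.ker (kosBd k I b ((i : ℤ) - 1))) -
    Module.finrank k (LinearMap.range (kosBd k I b (i : ℤ)))

/-- The Stanley–Reisner ideal `I_X`, encoded by its exponent set:
`x^a ∈ I_X` iff the support of `a` is not a face of `X`. -/
def SRIdealExp {n : ℕ} (X : SComplex n) : Set (Fin n → ℕ) :=
  {a | (Finset.univ.filter fun j => 1 ≤ a j) ∉ X}

/-- Multigraded Betti numbers `β_{i,b}(I_X)` of a Stanley–Reisner ideal, for a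
squarefree degree `b` given by a subset of the vertices. -/
noncomputable def bettiSR (k : Type) [Field k] {n : ℕ} (X : SComplex n)
    (i : ℕ) (b : Finset (Fin n)) : ℕ :=
  bettiMono k (SRIdealExp X) i (chi b)


/-- for the Alexander dual Stanley–Reisner ideal `I_{X^∨}` and a
squarefree degree `b`, `F ∈ K_b(I_{X^∨})` if and only if `F ∈ lk(bᶜ, X)`. -/
theorem Kb_dual_eq_link {n : ℕ} (X : SComplex n) (hX : IsSComplex X)
    (b : Finset (Fin n)) (F : Finset (Fin n)) :
    F ∈ Kb (SRIdealExp (dualC X)) (chi b) ↔ F ∈ linkC bᶜ X := by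
  have hsub : (∀ j ∈ F, 1 ≤ chi b j) ↔ F ⊆ b := by
    constructor
    · intro h j hj
      have := h j hj
      simp only [chi] at this
      by_contra hc
      simp [hc] at this
    · intro h j hj
      simp [chi, h hj]
  have hfilter : ∀ (hFb : F ⊆ b),
      (Finset.univ.filter fun j => 1 ≤ chi b j - chi F j) = b \ F := by
    intro hFb
    ext j
    rw [Finset.mem_filter]
    simp only [Finset.mem_univ, true_and, Finset.mem_sdiff, chi]
    by_cases hf : j ∈ F
    · simp [hf, hFb hf]
    · by_cases hb : j ∈ b <;> simp [hb, hf]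
  constructor
  · rintro ⟨h1, h2⟩
    have hFb := hsub.1 h1
    simp only [SRIdealExp, Set.mem_setOf_eq, hfilter hFb, dualC, not_not] at h2
    constructor
    · have : (b \ F)ᶜ = bᶜ ∪ F := by
        ext j; simp only [Finset.mem_compl, Finset.mem_sdiff, Finset.mem_union]
        by_cases hf : j ∈ F
        · simp [hf]
        · by_cases hb : j ∈ b <;> simp [hf, hb]
      rwa [this] at h2
    · ext j
      simp only [Finset.mem_inter, Finset.mem_compl, Finset.notMem_empty, iff_false]
      rintro ⟨hnb, hf⟩
      exact hnb (hFb hf)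
  · rintro ⟨h1, h2⟩
    have hFb : F ⊆ b := by
      intro j hj
      by_contra hb
      have : j ∈ bᶜ ∩ F := by simp [hb, hj]
      simp [h2] at this
    refine ⟨hsub.2 hFb, ?_⟩
    simp only [SRIdealExp, Set.mem_setOf_eq, hfilter hFb, dualC, not_not]
    have : (b \ F)ᶜ = bᶜ ∪ F := by
      ext j; simp only [Finset.mem_compl, Finset.mem_sdiff, Finset.mem_union]
      by_cases hf : j ∈ F
      · simp [hf]
      · by_cases hb : j ∈ b <;> simp [hf, hb]
    rw [this]
    exact h1
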